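/- arXiv:2102.09204 — 3 statements merged into one kernel-verified Lean document; each statement's English description precedes it below -/
import Mathlib

section
/- Let X and Y be standard Borel spaces, m a probability measure on X, κ a Markov kernel from X to Y, and γ a probability measure on X × Y whose first marginal is γ₁. Then H(γ | m ⊗ κ) = H(γ₁ | m) + H(γ | γ₁ ⊗ κ), as an identity in [0, ∞]. -/
/-! On probability measures the relative entropy is the Kullback–Leibler divergence. Disintegrating
`γ = γ₁ ⊗ₘ γ.condKernel` (possible as `Y` is standard Borel), the identity becomes the chain rule
`KL(μ ⊗ₘ κ' | m ⊗ₘ κ) = KL(μ | m) + KL(μ ⊗ₘ κ' | μ ⊗ₘ κ)` with `μ = γ₁` and `κ' = γ.condKernel`. -/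

open MeasureTheory ProbabilityTheory
open scoped ENNReal NNReal Classical

/-- Relative entropy `H(p|r) = ∫ log (dp/dr) dp ∈ [0,∞]` when `p ≪ r` (with value `+∞` when the
integrand is not integrable), and `H(p|r) = +∞` otherwise. -/
noncomputable def relEntropy {Y : Type*} [MeasurableSpace Y] (p r : Measure Y) : EReal :=
  if p ≪ r ∧ Integrable (llr p r) p then ((∫ x, llr p r x ∂p : ℝ) : EReal) else ⊤

open InformationTheory

lemma relEntropy_eq_klDiv {α : Type*} [MeasurableSpace α] (p r : Measure α)
    [IsProbabilityMeasure p] [IsProbabilityMeasure r] :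
    relEntropy p r = (klDiv p r : EReal) := by
  by_cases h : p ≪ r ∧ Integrable (llr p r) p
  · rw [relEntropy, if_pos h, ← toReal_klDiv_of_measure_eq h.1 (by simp),
      EReal.coe_ennreal_toReal (klDiv_ne_top h.1 h.2)]
  · rw [relEntropy, if_neg h, klDiv_eq_top_iff.mpr fun hac hint => h ⟨hac, hint⟩,
      EReal.coe_ennreal_top]

theorem relEntropy_compProd_chain_rule_general {X Y : Type*}
    [MeasurableSpace X] [MeasurableSpace Y] [StandardBorelSpace Y]
    (m : Measure X) [IsProbabilityMeasure m] (κ : Kernel X Y) [IsMarkovKernel κ]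
    (γ : Measure (X × Y)) [IsProbabilityMeasure γ] :
    relEntropy γ (m ⊗ₘ κ) = relEntropy γ.fst m + relEntropy γ (γ.fst ⊗ₘ κ) := by
  have : Nonempty Y := (nonempty_of_isProbabilityMeasure γ).map Prod.snd
  rw [relEntropy_eq_klDiv, relEntropy_eq_klDiv, relEntropy_eq_klDiv, ← EReal.coe_ennreal_add,
    ← γ.disintegrate γ.condKernel, Measure.fst_compProd, klDiv_compProd_eq_add]

/-- Chain rule for relative entropy: for a probability measure `m` on `X`, a Markov kernel `κ`
from `X` to `Y`, and a probability measure `γ` on `X × Y` with first marginal `γ₁`, one has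
`H(γ | m ⊗ κ) = H(γ₁ | m) + H(γ | γ₁ ⊗ κ)` in `[0,∞]`. -/
theorem relEntropy_compProd_chain_rule {X Y : Type*}
    [MeasurableSpace X] [StandardBorelSpace X] [MeasurableSpace Y] [StandardBorelSpace Y]
    (m : Measure X) [IsProbabilityMeasure m] (κ : Kernel X Y) [IsMarkovKernel κ]
    (γ : Measure (X × Y)) [IsProbabilityMeasure γ] :
    relEntropy γ (m ⊗ₘ κ) = relEntropy γ.fst m + relEntropy γ (γ.fst ⊗ₘ κ) :=
  relEntropy_compProd_chain_rule_general m κ γ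
end

section
/- Let n ≥ 1 and u, v ∈ ℝⁿ. Then the convex conjugate sup{⟨u,α⟩ + ⟨v,β⟩ − KL(α|β) : α, β ∈ [0,∞)ⁿ} equals 0 if vᵢ ≤ 1 − exp(uᵢ) for every i, and equals +∞ otherwise. -/
open scoped ENNReal NNReal Classical BigOperators

/-- The generalized Kullback–Leibler term `a·log(a/b) − a + b` for `a, b ≥ 0`, with the
conventions `0·log(0/b) = 0` for `b ≥ 0` and `a·log(a/0) = +∞` for `a > 0`. -/
noncomputable def klTerm (a b : ℝ≥0) : EReal :=
  if a = 0 then ((b : ℝ) : EReal)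
  else if b = 0 then ⊤
  else (((a : ℝ) * Real.log ((a : ℝ) / (b : ℝ)) - (a : ℝ) + (b : ℝ) : ℝ) : EReal)

/- The conjugate is computed coordinatewise. If `v ≤ 1 - exp u`, the tangent-line bound
`log x ≤ x - 1` at `x = b·exp u / a` gives `u·a + v·b ≤ a·log(a/b) - a + b`, so every value is
`≤ 0`, and `α = β = 0` attains `0`. If `vᵢ > 1 - exp uᵢ` for some `i`, the ray
`αᵢ = M·exp uᵢ`, `βᵢ = M` (zero elsewhere) makes the objective `M·(vᵢ - 1 + exp uᵢ) → ∞`. -/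

lemma EReal.coe_finset_sum {ι : Type*} (s : Finset ι) (f : ι → ℝ) :
    ((∑ i ∈ s, f i : ℝ) : EReal) = ∑ i ∈ s, (f i : EReal) :=
  map_sum (⟨⟨Real.toEReal, EReal.coe_zero⟩, EReal.coe_add⟩ : ℝ →+ EReal) f s

@[simp]
lemma klTerm_zero_left (b : ℝ≥0) : klTerm 0 b = ((b : ℝ) : EReal) := if_pos rfl

lemma klTerm_of_ne_zero {a b : ℝ≥0} (ha : a ≠ 0) (hb : b ≠ 0) :
    klTerm a b = (((a : ℝ) * Real.log ((a : ℝ) / b) - a + b : ℝ) : EReal) := by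
  rw [klTerm, if_neg ha, if_neg hb]

lemma mul_add_mul_le_mul_log_div {u v a b : ℝ} (hv : v ≤ 1 - Real.exp u) (ha : 0 < a)
    (hb : 0 < b) : u * a + v * b ≤ a * Real.log (a / b) - a + b := by
  have htangent : Real.log (b * Real.exp u / a) ≤ b * Real.exp u / a - 1 :=
    Real.log_le_sub_one_of_pos (by positivity)
  rw [Real.log_div (by positivity) ha.ne', Real.log_mul hb.ne' (Real.exp_ne_zero u),
    Real.log_exp] at htangent
  have hscaled : a * (Real.log b + u - Real.log a) ≤ b * Real.exp u - a :=
    calc _ ≤ a * (b * Real.exp u / a - 1) := mul_le_mul_of_nonneg_left htangent ha.le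
      _ = _ := by field_simp
  rw [Real.log_div ha.ne' hb.ne']
  nlinarith [mul_le_mul_of_nonneg_right hv hb.le]

lemma mul_add_mul_le_klTerm {u v : ℝ} (hv : v ≤ 1 - Real.exp u) (a b : ℝ≥0) :
    ((u * a + v * b : ℝ) : EReal) ≤ klTerm a b := by
  rcases eq_or_ne a 0 with rfl | ha
  · rw [klTerm_zero_left, EReal.coe_le_coe_iff, NNReal.coe_zero, mul_zero, zero_add]
    nlinarith [mul_le_mul_of_nonneg_right hv b.coe_nonneg, Real.exp_pos u]
  rcases eq_or_ne b 0 with rfl | hb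
  · simp [klTerm, ha]
  rw [klTerm_of_ne_zero ha hb, EReal.coe_le_coe_iff]
  exact mul_add_mul_le_mul_log_div hv (NNReal.coe_pos.mpr (pos_iff_ne_zero.mpr ha))
    (NNReal.coe_pos.mpr (pos_iff_ne_zero.mpr hb))

lemma klTerm_mul_exp_self {M : ℝ≥0} (hM : M ≠ 0) (u : ℝ) :
    klTerm (M * (Real.exp u).toNNReal) M
      = ((M * Real.exp u * u - M * Real.exp u + M : ℝ) : EReal) := by
  have hexp : (Real.exp u).toNNReal ≠ 0 := by simp [Real.exp_pos u]
  rw [klTerm_of_ne_zero (mul_ne_zero hM hexp) hM, NNReal.coe_mul,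
    Real.coe_toNNReal _ (Real.exp_pos u).le,
    mul_div_cancel_left₀ _ (NNReal.coe_ne_zero.mpr hM), Real.log_exp]

lemma Fintype.sum_apply_single {ι M R : Type*} [Fintype ι] [DecidableEq ι] [Zero M]
    [AddCommMonoid R] {i : ι} (f : ι → M → R) (hf : ∀ j ≠ i, f j 0 = 0) (x : M) :
    ∑ j, f j ((Pi.single i x : ι → M) j) = f i x := by
  rw [Finset.sum_eq_single_of_mem i (Finset.mem_univ i) fun j _ hj ↦ by
    rw [Pi.single_eq_of_ne hj, hf j hj], Pi.single_eq_same]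

section ConjugateObjective

variable {ι : Type*} [Fintype ι]

noncomputable def klConjugateObjective (u v : ι → ℝ) (α β : ι → ℝ≥0) : EReal :=
  ((∑ i, u i * (α i : ℝ) + ∑ i, v i * (β i : ℝ) : ℝ) : EReal) - ∑ i, klTerm (α i) (β i)

lemma klConjugateObjective_zero (u v : ι → ℝ) : klConjugateObjective u v 0 0 = 0 := by
  simp [klConjugateObjective]

lemma klConjugateObjective_nonpos {u v : ι → ℝ} (h : ∀ i, v i ≤ 1 - Real.exp (u i))
    (α β : ι → ℝ≥0) : klConjugateObjective u v α β ≤ 0 := by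
  rw [klConjugateObjective, EReal.sub_nonpos, ← Finset.sum_add_distrib, EReal.coe_finset_sum]
  exact Finset.sum_le_sum fun i _ ↦ mul_add_mul_le_klTerm (h i) (α i) (β i)

lemma klConjugateObjective_single_mul_exp (u v : ι → ℝ) (i : ι) {M : ℝ≥0} (hM : M ≠ 0) :
    klConjugateObjective u v (Pi.single i (M * (Real.exp (u i)).toNNReal)) (Pi.single i M)
      = ((M * (v i - (1 - Real.exp (u i))) : ℝ) : EReal) := by
  rw [klConjugateObjective,
    Fintype.sum_apply_single (fun j (a : ℝ≥0) ↦ u j * (a : ℝ)) (by simp),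
    Fintype.sum_apply_single (fun j (b : ℝ≥0) ↦ v j * (b : ℝ)) (by simp),
    Fintype.sum_apply_single (fun j a ↦ klTerm a ((Pi.single i M : ι → ℝ≥0) j))
      (fun j hj ↦ by simp [Pi.single_eq_of_ne hj]),
    Pi.single_eq_same, klTerm_mul_exp_self hM, ← EReal.coe_sub]
  simp only [NNReal.coe_mul, Real.coe_toNNReal _ (Real.exp_pos _).le]
  congr 1
  ring

lemma klConjugateObjective_unbounded {u v : ι → ℝ} {i : ι} (hi : 1 - Real.exp (u i) < v i)
    (r : ℝ) : ∃ α β, (r : EReal) < klConjugateObjective u v α β := by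
  set c := v i - (1 - Real.exp (u i))
  have hc : 0 < c := sub_pos.mpr hi
  set M := ((|r| + 1) / c).toNNReal
  have hM : (M : ℝ) = (|r| + 1) / c := Real.coe_toNNReal _ (by positivity)
  have hM0 : M ≠ 0 := by rw [← NNReal.coe_ne_zero, hM]; positivity
  refine ⟨Pi.single i (M * (Real.exp (u i)).toNNReal), Pi.single i M, ?_⟩
  rw [klConjugateObjective_single_mul_exp u v i hM0, EReal.coe_lt_coe_iff, hM,
    div_mul_cancel₀ _ hc.ne']
  linarith [le_abs_self r]

end ConjugateObjective

theorem klTerm_conjugate_general (n : ℕ) (u v : Fin n → ℝ) :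
    (⨆ (α : Fin n → ℝ≥0) (β : Fin n → ℝ≥0),
        ((((∑ i, u i * (α i : ℝ)) + ∑ i, v i * (β i : ℝ) : ℝ) : EReal)
          - ∑ i, klTerm (α i) (β i)))
    = if ∀ i, v i ≤ 1 - Real.exp (u i) then 0 else ⊤ := by
  change ⨆ (α) (β), klConjugateObjective u v α β = _
  split_ifs with h
  · exact le_antisymm (iSup₂_le (klConjugateObjective_nonpos h))
      (le_iSup₂_of_le 0 0 (klConjugateObjective_zero u v).ge)
  · obtain ⟨i, hi⟩ := not_forall.mp h
    refine (EReal.eq_top_iff_forall_lt _).mpr fun r ↦ ?_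
    obtain ⟨α, β, hr⟩ := klConjugateObjective_unbounded (not_le.mp hi) r
    exact hr.trans_le (le_iSup₂_of_le α β le_rfl)

/-- With `KL(α|β) = Σᵢ (αᵢ·log(αᵢ/βᵢ) − αᵢ + βᵢ)` on `[0,∞)ⁿ × [0,∞)ⁿ`, the convex conjugate
`sup {⟨u,α⟩ + ⟨v,β⟩ − KL(α|β)}` equals `0` if `vᵢ ≤ 1 − exp(uᵢ)` for every `i`,
and `+∞` otherwise. -/
theorem klTerm_conjugate (n : ℕ) (hn : 1 ≤ n) (u v : Fin n → ℝ) :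
    (⨆ (α : Fin n → ℝ≥0) (β : Fin n → ℝ≥0),
        ((((∑ i, u i * (α i : ℝ)) + ∑ i, v i * (β i : ℝ) : ℝ) : EReal)
          - ∑ i, klTerm (α i) (β i)))
    = if ∀ i, v i ≤ 1 - Real.exp (u i) then 0 else ⊤ :=
  klTerm_conjugate_general n u v
end

section
/- Let x₁, …, x_n ∈ ℝ^d, ε > 0, let K̄ be the row-normalized Gibbs kernel, and let π₀ ∈ (0,∞)ⁿ be a probability vector (Σᵢ (π₀)ᵢ = 1). Define the reference matrix Kᵢⱼ = (π₀)ᵢ·K̄ᵢⱼ and, for α, β ∈ [0,∞)ⁿ, the cost OT_ε(α, β; π₀) = inf{ε·Σ_{ij} γ_{ij}·log(γ_{ij}/K_{ij}) : γ ∈ Π(α,β)}. Then for all u, v ∈ ℝⁿ, sup{⟨u,α⟩ + ⟨v,β⟩ − OT_ε(α,β;π₀) : α, β ∈ [0,∞)ⁿ} = ε·Σ_{ij} exp(uᵢ/ε)·K_{ij}·exp(vⱼ/ε − 1). -/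
open scoped ENNReal NNReal Classical BigOperators

/-- The Gibbs kernel `K_{ij} = exp(−‖xᵢ − xⱼ‖²/(2ε))`. -/
noncomputable def gibbsK {n d : ℕ} (x : Fin n → EuclideanSpace ℝ (Fin d)) (ε : ℝ)
    (i j : Fin n) : ℝ :=
  Real.exp (-‖x i - x j‖ ^ 2 / (2 * ε))

/-- The row-normalized Gibbs kernel `K̄_{ij} = K_{ij}/Σ_k K_{ik}`. -/
noncomputable def gibbsKbar {n d : ℕ} (x : Fin n → EuclideanSpace ℝ (Fin d)) (ε : ℝ)
    (i j : Fin n) : ℝ :=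
  gibbsK x ε i j / ∑ k, gibbsK x ε i k

/-- The entropic optimal transport cost relative to the reference matrix
`K_{ij} = (π₀)ᵢ·K̄_{ij}`:
`OT_ε(α, β; π₀) = inf {ε·Σ_{ij} γ_{ij}·log(γ_{ij}/K_{ij}) : γ ∈ Π(α,β)}`
(the infimum over the empty set being `+∞`).  Terms with `γ_{ij} = 0` contribute `0`. -/
noncomputable def OTepsRef {n d : ℕ} (x : Fin n → EuclideanSpace ℝ (Fin d)) (ε : ℝ)
    (π₀ : Fin n → ℝ) (α β : Fin n → ℝ≥0) : EReal :=
  ⨅ γ : {γ : Fin n → Fin n → ℝ≥0 //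
      (∀ i, ∑ j, γ i j = α i) ∧ (∀ j, ∑ i, γ i j = β j)},
    ((ε * ∑ i, ∑ j, (γ.1 i j : ℝ) *
        Real.log ((γ.1 i j : ℝ) / (π₀ i * gibbsKbar x ε i j)) : ℝ) : EReal)

/-!
Fenchel–Young for the entropy: `t·s ≤ K·e^{s-1} + t·log(t/K)` for `t ≥ 0`, with equality at
`t = K·e^{s-1}`. Summing it with `s = (uᵢ + vⱼ)/ε` over the entries of a coupling `γ ∈ Π(α,β)`
bounds `⟨u,α⟩ + ⟨v,β⟩ − OT_ε(α,β)` by `ε·Σ_{ij} Kᵢⱼ·e^{(uᵢ+vⱼ)/ε-1}`, and the Gibbs plan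
`γᵢⱼ = Kᵢⱼ·e^{(uᵢ+vⱼ)/ε-1}`, taken with its own marginals, attains the bound.
-/

open Finset Real

lemma mul_le_mul_exp_add_mul_log_div {t K : ℝ} (s : ℝ) (ht : 0 ≤ t) (hK : 0 < K) :
    t * s ≤ K * exp (s - 1) + t * log (t / K) := by
  rcases ht.eq_or_lt with rfl | ht
  · simp only [zero_mul, add_zero]
    positivity
  · have hexp := add_one_le_exp (s - 1 - log (t / K))
    have hexp_eq : t * exp (s - 1 - log (t / K)) = K * exp (s - 1) := by
      rw [exp_sub, exp_log (div_pos ht hK)]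
      field_simp
    nlinarith [mul_le_mul_of_nonneg_left hexp ht.le]

lemma sum_mul_sum_add_sum_mul_sum {ι κ : Type*} [Fintype ι] [Fintype κ]
    (γ : ι → κ → ℝ) (u : ι → ℝ) (v : κ → ℝ) :
    ∑ i, u i * ∑ j, γ i j + ∑ j, v j * ∑ i, γ i j = ∑ i, ∑ j, γ i j * (u i + v j) := by
  simp only [mul_sum, mul_add, sum_add_distrib]
  rw [sum_comm (f := fun j i => v j * γ i j)]
  simp only [mul_comm]

lemma gibbsKbar_pos {n d : ℕ} (x : Fin n → EuclideanSpace ℝ (Fin d)) (ε : ℝ) (i j : Fin n) :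
    0 < gibbsKbar x ε i j :=
  div_pos (exp_pos _) (sum_pos (fun _ _ => exp_pos _) ⟨i, mem_univ i⟩)

section EntropicOT

variable {ι κ : Type*} {ε : ℝ} {K : ι → κ → ℝ}

noncomputable def gibbsPlan (ε : ℝ) (K : ι → κ → ℝ) (u : ι → ℝ) (v : κ → ℝ) (i : ι) (j : κ) :
    ℝ :=
  exp (u i / ε) * K i j * exp (v j / ε - 1)

lemma gibbsPlan_eq (u : ι → ℝ) (v : κ → ℝ) (i : ι) (j : κ) :
    gibbsPlan ε K u v i j = K i j * exp ((u i + v j) / ε - 1) := by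
  rw [gibbsPlan, add_div, add_sub_assoc, exp_add]
  ring

lemma gibbsPlan_pos (hK : ∀ i j, 0 < K i j) (u : ι → ℝ) (v : κ → ℝ) (i : ι) (j : κ) :
    0 < gibbsPlan ε K u v i j := by
  unfold gibbsPlan
  have := hK i j
  positivity

lemma mul_log_gibbsPlan_div (hε : 0 < ε) (hK : ∀ i j, 0 < K i j) (u : ι → ℝ) (v : κ → ℝ)
    (i : ι) (j : κ) :
    ε * (gibbsPlan ε K u v i j * log (gibbsPlan ε K u v i j / K i j))
      = gibbsPlan ε K u v i j * (u i + v j) - ε * gibbsPlan ε K u v i j := by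
  rw [gibbsPlan_eq, mul_div_cancel_left₀ _ (hK i j).ne', log_exp]
  field_simp

lemma mul_add_le_gibbsPlan_add_mul_log (hε : 0 < ε) (hK : ∀ i j, 0 < K i j) (u : ι → ℝ)
    (v : κ → ℝ) (i : ι) (j : κ) {t : ℝ} (ht : 0 ≤ t) :
    t * (u i + v j) ≤ ε * gibbsPlan ε K u v i j + ε * (t * log (t / K i j)) := by
  have h := mul_le_mul_exp_add_mul_log_div ((u i + v j) / ε) ht (hK i j)
  rw [gibbsPlan_eq, ← mul_add, ← div_le_iff₀' hε, mul_div_assoc]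
  exact h

variable [Fintype ι] [Fintype κ]

noncomputable def entropicOT (ε : ℝ) (K : ι → κ → ℝ) (α : ι → ℝ≥0) (β : κ → ℝ≥0) : EReal :=
  ⨅ γ : {γ : ι → κ → ℝ≥0 // (∀ i, ∑ j, γ i j = α i) ∧ (∀ j, ∑ i, γ i j = β j)},
    ((ε * ∑ i, ∑ j, (γ.1 i j : ℝ) * log ((γ.1 i j : ℝ) / K i j) : ℝ) : EReal)

lemma sub_le_entropicOT (hε : 0 < ε) (hK : ∀ i j, 0 < K i j) (u : ι → ℝ) (v : κ → ℝ)
    (α : ι → ℝ≥0) (β : κ → ℝ≥0) :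
    ((∑ i, u i * (α i : ℝ) + ∑ j, v j * (β j : ℝ) - ε * ∑ i, ∑ j, gibbsPlan ε K u v i j : ℝ)
      : EReal) ≤ entropicOT ε K α β := by
  refine le_iInf fun ⟨γ, hrow, hcol⟩ => EReal.coe_le_coe_iff.mpr ?_
  have hpair : ∑ i, u i * (α i : ℝ) + ∑ j, v j * (β j : ℝ)
      = ∑ i, ∑ j, (γ i j : ℝ) * (u i + v j) := by
    simp only [← hrow, ← hcol, NNReal.coe_sum]
    exact sum_mul_sum_add_sum_mul_sum _ u v
  have hbound := sum_le_sum fun i (_ : i ∈ univ) => sum_le_sum fun j (_ : j ∈ univ) =>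
    mul_add_le_gibbsPlan_add_mul_log hε hK u v i j (γ i j).coe_nonneg
  simp only [sum_add_distrib, ← mul_sum] at hbound
  linarith

lemma entropicOT_le_of_coe_eq_gibbsPlan (hε : 0 < ε) (hK : ∀ i j, 0 < K i j) (u : ι → ℝ)
    (v : κ → ℝ) {γ : ι → κ → ℝ≥0} (hγ : ∀ i j, (γ i j : ℝ) = gibbsPlan ε K u v i j) :
    entropicOT ε K (fun i => ∑ j, γ i j) (fun j => ∑ i, γ i j)
      ≤ ((∑ i, u i * ((∑ j, γ i j : ℝ≥0) : ℝ) + ∑ j, v j * ((∑ i, γ i j : ℝ≥0) : ℝ)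
          - ε * ∑ i, ∑ j, gibbsPlan ε K u v i j : ℝ) : EReal) := by
  refine iInf_le_of_le ⟨γ, fun _ => rfl, fun _ => rfl⟩ (EReal.coe_le_coe_iff.mpr (le_of_eq ?_))
  simp only [NNReal.coe_sum, hγ]
  rw [sum_mul_sum_add_sum_mul_sum, mul_sum, mul_sum, ← sum_sub_distrib]
  simp only [mul_sum, mul_log_gibbsPlan_div hε hK, sum_sub_distrib]

theorem iSup_sub_entropicOT (hε : 0 < ε) (hK : ∀ i j, 0 < K i j) (u : ι → ℝ) (v : κ → ℝ) :
    (⨆ (α : ι → ℝ≥0) (β : κ → ℝ≥0),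
        ((∑ i, u i * (α i : ℝ) + ∑ j, v j * (β j : ℝ) : ℝ) : EReal) - entropicOT ε K α β)
      = ((ε * ∑ i, ∑ j, gibbsPlan ε K u v i j : ℝ) : EReal) := by
  have sub_coe_sub_self (a s : ℝ) : (a : EReal) - ((a - s : ℝ) : EReal) = s := by
    rw [← EReal.coe_sub, sub_sub_cancel]
  refine le_antisymm (iSup₂_le fun α β => ?_) ?_
  · calc _ ≤ _ - _ := EReal.sub_le_sub le_rfl (sub_le_entropicOT hε hK u v α β)
      _ = _ := sub_coe_sub_self _ _
  · let γ : ι → κ → ℝ≥0 := fun i j => ⟨gibbsPlan ε K u v i j, (gibbsPlan_pos hK u v i j).le⟩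
    refine le_iSup₂_of_le (fun i => ∑ j, γ i j) (fun j => ∑ i, γ i j) ?_
    calc _ = _ := (sub_coe_sub_self _ _).symm
      _ ≤ _ := EReal.sub_le_sub le_rfl (entropicOT_le_of_coe_eq_gibbsPlan hε hK u v fun _ _ => rfl)

end EntropicOT

theorem OTepsRef_conjugate_general (n d : ℕ) (x : Fin n → EuclideanSpace ℝ (Fin d))
    (ε : ℝ) (hε : 0 < ε) (π₀ : Fin n → ℝ) (hπ₀ : ∀ i, 0 < π₀ i)
    (u v : Fin n → ℝ) :
    (⨆ (α : Fin n → ℝ≥0) (β : Fin n → ℝ≥0),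
        ((((∑ i, u i * (α i : ℝ)) + ∑ i, v i * (β i : ℝ) : ℝ) : EReal)
          - OTepsRef x ε π₀ α β))
    = ((ε * ∑ i, ∑ j, Real.exp (u i / ε) * (π₀ i * gibbsKbar x ε i j)
          * Real.exp (v j / ε - 1) : ℝ) : EReal) :=
  -- `OTepsRef x ε π₀` unfolds to `entropicOT ε (fun i j => π₀ i * gibbsKbar x ε i j)`.
  iSup_sub_entropicOT hε (fun i j => mul_pos (hπ₀ i) (gibbsKbar_pos x ε i j)) u v

/-- The convex conjugate of the entropic optimal transport cost with reference
`K_{ij} = (π₀)ᵢ·K̄_{ij}` for a strictly positive probability vector `π₀`: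
`sup {⟨u,α⟩ + ⟨v,β⟩ − OT_ε(α,β;π₀)} = ε·Σ_{ij} exp(uᵢ/ε)·K_{ij}·exp(vⱼ/ε − 1)`. -/
theorem OTepsRef_conjugate (n d : ℕ) (hn : 1 ≤ n) (x : Fin n → EuclideanSpace ℝ (Fin d))
    (ε : ℝ) (hε : 0 < ε) (π₀ : Fin n → ℝ) (hπ₀ : ∀ i, 0 < π₀ i) (hπ₀sum : ∑ i, π₀ i = 1)
    (u v : Fin n → ℝ) :
    (⨆ (α : Fin n → ℝ≥0) (β : Fin n → ℝ≥0),
        ((((∑ i, u i * (α i : ℝ)) + ∑ i, v i * (β i : ℝ) : ℝ) : EReal)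
          - OTepsRef x ε π₀ α β))
    = ((ε * ∑ i, ∑ j, Real.exp (u i / ε) * (π₀ i * gibbsKbar x ε i j)
          * Real.exp (v j / ε - 1) : ℝ) : EReal) :=
  OTepsRef_conjugate_general n d x ε hε π₀ hπ₀ u v
end
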